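/- arXiv:1909.13511 — 3 statements merged into one kernel-verified Lean document; each statement's English description precedes it below -/
import Mathlib

section
/- Let A, B be real symmetric positive semidefinite n×n matrices with Ker(A) = Ker(B) = W and α⟨Bu,u⟩ ≤ ⟨Au,u⟩ ≤ β⟨Bu,u⟩ for all u, with α, β > 0. Consider the RSS scheme (u^{k+1} - u^k)/Δt + τB(u^{k+1} - u^k) + Au^k = 0 with 0 ≤ τ < β/2. If 0 < Δt < 2 / ((1 - 2τ/β) ρ(A)), where ρ(A) is the spectral radius of A, then ⟨A u^{k+1}, u^{k+1}⟩ ≤ ⟨A u^k, u^k⟩ for all k. -/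
/-!
With `w = u (k + 1) - u k` and `A` symmetric, the scheme gives the energy identity
`⟨A u^{k+1}, u^{k+1}⟩ - ⟨A u^k, u^k⟩ = ⟨A w, w⟩ - 2τ ⟨B w, w⟩ - (2 / Δt) |w|²`.
Since `⟨A w, w⟩ ≤ β ⟨B w, w⟩`, the first two terms are at most `(1 - 2τ/β) ⟨A w, w⟩`, and the
Rayleigh bound `⟨A w, w⟩ ≤ ρ(A) |w|²` together with the step-size restriction bounds that by
`(2 / Δt) |w|²`.
-/

open Matrix

namespace Matrix

variable {ι : Type*} [Fintype ι]

lemma IsSymm.mulVec_add_dotProduct_add {R : Type*} [CommRing R] {A : Matrix ι ι R}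
    (hA : A.IsSymm) (x w : ι → R) :
    A *ᵥ (x + w) ⬝ᵥ (x + w) = A *ᵥ x ⬝ᵥ x + 2 * (A *ᵥ x ⬝ᵥ w) + A *ᵥ w ⬝ᵥ w := by
  have hcross : A *ᵥ w ⬝ᵥ x = A *ᵥ x ⬝ᵥ w := by
    rw [dotProduct_comm, dotProduct_mulVec, ← mulVec_transpose, hA.eq]
  rw [mulVec_add, add_dotProduct, dotProduct_add, dotProduct_add, hcross]
  ring

variable [DecidableEq ι]

lemma IsHermitian.eigenvalues_le {A : Matrix ι ι ℝ} (hA : A.IsHermitian) {ρ : ℝ}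
    (hρ : ρ ∈ upperBounds {r : ℝ | ∃ v : ι → ℝ, v ≠ 0 ∧ A *ᵥ v = r • v}) (i : ι) :
    hA.eigenvalues i ≤ ρ :=
  hρ ⟨_, fun h => (hA.eigenvectorBasis.orthonormal.ne_zero i) (by simpa using h),
    hA.mulVec_eigenvectorBasis i⟩

lemma IsHermitian.posSemidef_algebraMap_sub {A : Matrix ι ι ℝ} (hA : A.IsHermitian) {ρ : ℝ}
    (hρ : ρ ∈ upperBounds {r : ℝ | ∃ v : ι → ℝ, v ≠ 0 ∧ A *ᵥ v = r • v}) :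
    (algebraMap ℝ _ ρ - A).PosSemidef := by
  have hρ_herm : (algebraMap ℝ (Matrix ι ι ℝ) ρ).IsHermitian := by
    rw [algebraMap_eq_diagonal]
    exact isHermitian_diagonal _
  refine posSemidef_iff_isHermitian_and_spectrum_nonneg.mpr ⟨hρ_herm.sub hA, ?_⟩
  rw [← spectrum.singleton_sub_eq, hA.spectrum_real_eq_range_eigenvalues]
  rintro _ ⟨_, rfl, _, ⟨i, rfl⟩, rfl⟩
  exact sub_nonneg.mpr (hA.eigenvalues_le hρ i)

lemma IsHermitian.mulVec_dotProduct_le {A : Matrix ι ι ℝ} (hA : A.IsHermitian) {ρ : ℝ}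
    (hρ : ρ ∈ upperBounds {r : ℝ | ∃ v : ι → ℝ, v ≠ 0 ∧ A *ᵥ v = r • v}) (w : ι → ℝ) :
    A *ᵥ w ⬝ᵥ w ≤ ρ * (w ⬝ᵥ w) := by
  have hnonneg := (hA.posSemidef_algebraMap_sub hρ).dotProduct_mulVec_nonneg w
  rw [Algebra.algebraMap_eq_smul_one, sub_mulVec, smul_mulVec, one_mulVec, star_trivial,
    dotProduct_sub, dotProduct_smul, dotProduct_comm w (A *ᵥ w), smul_eq_mul] at hnonneg
  linarith

end Matrix

lemma rss_energy_identity {ι : Type*} [Fintype ι] {A B : Matrix ι ι ℝ} (hA : A.IsSymm)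
    {τ Δt : ℝ} {x w : ι → ℝ} (hstep : Δt⁻¹ • w + τ • B *ᵥ w + A *ᵥ x = 0) :
    A *ᵥ (x + w) ⬝ᵥ (x + w) = A *ᵥ x ⬝ᵥ x
      + (A *ᵥ w ⬝ᵥ w - 2 * τ * (B *ᵥ w ⬝ᵥ w) - 2 * Δt⁻¹ * (w ⬝ᵥ w)) := by
  have hcross : A *ᵥ x ⬝ᵥ w = -(Δt⁻¹ * (w ⬝ᵥ w) + τ * (B *ᵥ w ⬝ᵥ w)) := by
    rw [eq_neg_of_add_eq_zero_right hstep]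
    simp only [neg_dotProduct, add_dotProduct, smul_dotProduct, smul_eq_mul]
  rw [hA.mulVec_add_dotProduct_add, hcross]
  ring

lemma rss_energy_increment_nonpos {a b s β τ ρ Δt : ℝ} (hβ : 0 < β) (hτ0 : 0 ≤ τ)
    (hτ : 2 * τ ≤ β) (hΔt : 0 < Δt) (hΔtρ : Δt ≤ 2 / ((1 - 2 * τ / β) * ρ)) (hs : 0 ≤ s)
    (haβ : a ≤ β * b) (haρ : a ≤ ρ * s) :
    a - 2 * τ * b - 2 * Δt⁻¹ * s ≤ 0 := by
  set c := 1 - 2 * τ / β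
  have hc : 0 ≤ c := sub_nonneg.mpr ((div_le_one hβ).mpr hτ)
  have hcρ : c * ρ ≤ 2 * Δt⁻¹ := by
    rcases le_or_gt (c * ρ) 0 with hneg | hpos
    · exact hneg.trans (by positivity)
    · rw [← div_eq_mul_inv, le_div_iff₀ hΔt, mul_comm]
      exact (le_div_iff₀ hpos).mp hΔtρ
  have hb : 2 * τ / β * a ≤ 2 * τ * b :=
    calc 2 * τ / β * a ≤ 2 * τ / β * (β * b) := mul_le_mul_of_nonneg_left haβ (by positivity)
      _ = 2 * τ * b := by field_simp
  calc a - 2 * τ * b - 2 * Δt⁻¹ * s ≤ c * a - 2 * Δt⁻¹ * s := by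
        simp only [c]; linarith
    _ ≤ c * (ρ * s) - 2 * Δt⁻¹ * s := by gcongr
    _ = (c * ρ - 2 * Δt⁻¹) * s := by ring
    _ ≤ 0 := mul_nonpos_of_nonpos_of_nonneg (by linarith) hs

theorem stmt_4_general {n : ℕ} (A B : Matrix (Fin n) (Fin n) ℝ)
    (hA : A.PosSemidef)
    (α β : ℝ) (hβ : 0 < β)
    (hspec : ∀ v : Fin n → ℝ,
      α * (B.mulVec v ⬝ᵥ v) ≤ A.mulVec v ⬝ᵥ v ∧ A.mulVec v ⬝ᵥ v ≤ β * (B.mulVec v ⬝ᵥ v))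
    (ρA : ℝ) (hρ : IsGreatest {r : ℝ | ∃ v : Fin n → ℝ, v ≠ 0 ∧ A.mulVec v = r • v} ρA)
    (τ Δt : ℝ) (hτ0 : 0 ≤ τ) (hτ : τ < β / 2)
    (hΔt : 0 < Δt) (hΔt' : Δt < 2 / ((1 - 2 * τ / β) * ρA))
    (u : ℕ → Fin n → ℝ)
    (hscheme : ∀ k, Δt⁻¹ • (u (k + 1) - u k)
      + τ • B.mulVec (u (k + 1) - u k) + A.mulVec (u k) = 0) :
    ∀ k : ℕ, A.mulVec (u (k + 1)) ⬝ᵥ u (k + 1) ≤ A.mulVec (u k) ⬝ᵥ u k := by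
  intro k
  set w := u (k + 1) - u k
  rw [show u (k + 1) = u k + w from (add_sub_cancel _ _).symm,
    rss_energy_identity (isHermitian_iff_isSymm.mp hA.isHermitian) (hscheme k)]
  have hw : 0 ≤ w ⬝ᵥ w := by simpa using dotProduct_star_self_nonneg w
  have hincr := rss_energy_increment_nonpos hβ hτ0 (by linarith) hΔt hΔt'.le hw (hspec w).2
    (hA.isHermitian.mulVec_dotProduct_le hρ.2 w)
  linarith

theorem stmt_4 {n : ℕ} (A B : Matrix (Fin n) (Fin n) ℝ)
    (hA : A.PosSemidef) (hB : B.PosSemidef)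
    (W : Submodule ℝ (Fin n → ℝ))
    (hkerA : ∀ v, A.mulVec v = 0 ↔ v ∈ W) (hkerB : ∀ v, B.mulVec v = 0 ↔ v ∈ W)
    (α β : ℝ) (hα : 0 < α) (hβ : 0 < β)
    (hspec : ∀ v : Fin n → ℝ,
      α * (B.mulVec v ⬝ᵥ v) ≤ A.mulVec v ⬝ᵥ v ∧ A.mulVec v ⬝ᵥ v ≤ β * (B.mulVec v ⬝ᵥ v))
    (ρA : ℝ) (hρ : IsGreatest {r : ℝ | ∃ v : Fin n → ℝ, v ≠ 0 ∧ A.mulVec v = r • v} ρA)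
    (τ Δt : ℝ) (hτ0 : 0 ≤ τ) (hτ : τ < β / 2)
    (hΔt : 0 < Δt) (hΔt' : Δt < 2 / ((1 - 2 * τ / β) * ρA))
    (u : ℕ → Fin n → ℝ)
    (hscheme : ∀ k, Δt⁻¹ • (u (k + 1) - u k)
      + τ • B.mulVec (u (k + 1) - u k) + A.mulVec (u k) = 0) :
    ∀ k : ℕ, A.mulVec (u (k + 1)) ⬝ᵥ u (k + 1) ≤ A.mulVec (u k) ⬝ᵥ u k :=
  stmt_4_general A B hA α β hβ hspec ρA hρ τ Δt hτ0 hτ hΔt hΔt' u hscheme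
end

section
/- Under the same hypotheses as the RSS-IMEX Allen-Cahn scheme with W = {0} and τ ≥ β/2, if (τ/β - 1/2)λ_min(A) - L/(2ε²) < 0, then E(u^{k+1}) ≤ E(u^k) for all k whenever 0 < Δt < 1 / (L/(2ε²) - (τ/β - 1/2)λ_min(A)). -/
/-!
Test the scheme against `d = u^{k+1} - u^k`:
`Δt⁻¹ |d|² + τ ⟨B d, d⟩ + ⟨A u^k, d⟩ + ε⁻² ⟨f(u^k), d⟩ = 0`.
Expanding the quadratic part of `E` and bounding each `F(u^{k+1}_i)` by its tangent line plus
`(L/2) d_i²` (as `f` is `L`-Lipschitz) turns this into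
`E(u^{k+1}) - E(u^k) ≤ ½ ⟨A d, d⟩ - τ ⟨B d, d⟩ + (L/(2ε²) - Δt⁻¹) |d|²`.
Since `⟨A d, d⟩ ≤ β ⟨B d, d⟩` and `τ/β ≥ 1/2`, the first two terms are at most
`(1/2 - τ/β) λ_min |d|²`, and the time-step restriction makes the total coefficient of `|d|²`
nonpositive.
-/

open Matrix

namespace Matrix

variable {ι : Type*} [Fintype ι] {A : Matrix ι ι ℝ}

theorem IsHermitian.mul_dotProduct_self_le (hA : A.IsHermitian) {lam : ℝ}
    (hlam : lam ∈ lowerBounds {r : ℝ | ∃ v : ι → ℝ, v ≠ 0 ∧ A *ᵥ v = r • v}) (v : ι → ℝ) :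
    lam * (v ⬝ᵥ v) ≤ A *ᵥ v ⬝ᵥ v := by
  classical
  have hM : (A - lam • 1).IsHermitian := hA.sub (isHermitian_one.smul (.all lam))
  have hpsd : (A - lam • 1).PosSemidef := by
    refine hM.posSemidef_iff_eigenvalues_nonneg.mpr fun i => ?_
    set w := ⇑(hM.eigenvectorBasis i)
    have hw : w ≠ 0 := fun h =>
      hM.eigenvectorBasis.orthonormal.ne_zero i (by ext j; exact congrFun h j)
    have hAw : A *ᵥ w = (hM.eigenvalues i + lam) • w := by
      have := hM.mulVec_eigenvectorBasis i
      rw [sub_mulVec, smul_mulVec, one_mulVec, sub_eq_iff_eq_add] at this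
      rw [this, add_smul]
    simpa using hlam ⟨w, hw, hAw⟩
  have := hpsd.dotProduct_mulVec_nonneg v
  simp only [star_trivial, sub_mulVec, smul_mulVec, one_mulVec, dotProduct_sub,
    dotProduct_smul, smul_eq_mul, dotProduct_comm v (A *ᵥ v)] at this
  linarith

theorem IsSymm.mulVec_dotProduct_comm {R : Type*} [CommSemiring R] {M : Matrix ι ι R}
    (hM : M.IsSymm) (v w : ι → R) : M *ᵥ v ⬝ᵥ w = M *ᵥ w ⬝ᵥ v := by
  rw [dotProduct_comm, dotProduct_mulVec, ← mulVec_transpose, hM.eq]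

theorem IsSymm.mulVec_add_dotProduct_add_s10 {R : Type*} [CommSemiring R] {M : Matrix ι ι R}
    (hM : M.IsSymm) (x d : ι → R) :
    M *ᵥ (x + d) ⬝ᵥ (x + d) = M *ᵥ x ⬝ᵥ x + 2 * (M *ᵥ x ⬝ᵥ d) + M *ᵥ d ⬝ᵥ d := by
  rw [mulVec_add, add_dotProduct, dotProduct_add, dotProduct_add, hM.mulVec_dotProduct_comm d x]
  ring

end Matrix

theorem le_add_mul_sub_add_sq {f F : ℝ → ℝ} {L a : ℝ} (hF : ∀ x, HasDerivAt F (f x) x)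
    (hf : ∀ x, |f x - f a| ≤ L * |x - a|) (b : ℝ) :
    F b ≤ F a + f a * (b - a) + L / 2 * (b - a) ^ 2 := by
  set g : ℝ → ℝ := fun t => F t - f a * t - L / 2 * (t - a) ^ 2
  have hg : ∀ t, HasDerivAt g (f t - f a - L * (t - a)) t := fun t =>
    (((hF t).sub ((hasDerivAt_id' t).const_mul (f a))).sub
      (((hasDerivAt_id' t).sub_const a).pow 2 |>.const_mul (L / 2))).congr_deriv (by ring)
  have hgc : Continuous g := continuous_iff_continuousAt.mpr fun t => (hg t).continuousAt
  have hgd : Differentiable ℝ g := fun t => (hg t).differentiableAt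
  suffices g b ≤ g a by simp only [g] at this; linarith
  rcases le_total a b with hab | hba
  · refine antitoneOn_of_deriv_nonpos (convex_Ici a) hgc.continuousOn hgd.differentiableOn
      (fun t ht => ?_) Set.self_mem_Ici hab hab
    rw [interior_Ici] at ht
    have := (le_abs_self _).trans (hf t)
    rw [abs_of_pos (sub_pos.mpr ht)] at this
    rw [(hg t).deriv]; linarith
  · refine monotoneOn_of_deriv_nonneg (convex_Iic a) hgc.continuousOn hgd.differentiableOn
      (fun t ht => ?_) hba Set.self_mem_Iic hba
    rw [interior_Iic] at ht
    have := neg_abs_le _ |>.trans' (neg_le_neg (hf t))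
    rw [abs_of_neg (sub_neg.mpr ht)] at this
    rw [(hg t).deriv]; linarith

theorem sum_le_sum_add_dotProduct_add {ι : Type*} [Fintype ι] {f F : ℝ → ℝ} {L : ℝ}
    (hF : ∀ x, HasDerivAt F (f x) x) (hf : ∀ a b, |f b - f a| ≤ L * |b - a|) (x y : ι → ℝ) :
    ∑ i, F (y i) ≤ ∑ i, F (x i) + (fun i => f (x i)) ⬝ᵥ (y - x) + L / 2 * ((y - x) ⬝ᵥ (y - x)) := by
  simp only [dotProduct, Finset.mul_sum, ← Finset.sum_add_distrib]
  gcongr with i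
  have := le_add_mul_sub_add_sq hF (hf (x i)) (y i)
  simp only [Pi.sub_apply]
  linarith

section AllenCahn

variable {ι : Type*} [Fintype ι] {A B : Matrix ι ι ℝ} {lam β τ : ℝ}

/-- `κ` stands for `1 / ε²`. -/
noncomputable def allenCahnEnergy (A : Matrix ι ι ℝ) (F : ℝ → ℝ) (κ : ℝ) (v : ι → ℝ) : ℝ :=
  1 / 2 * (A *ᵥ v ⬝ᵥ v) + κ * ∑ i, F (v i)

theorem half_mulVec_dotProduct_sub_le (hA : A.IsHermitian)
    (hlam : lam ∈ lowerBounds {r : ℝ | ∃ v : ι → ℝ, v ≠ 0 ∧ A *ᵥ v = r • v}) (hβ : 0 < β)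
    (hAB : ∀ v, A *ᵥ v ⬝ᵥ v ≤ β * (B *ᵥ v ⬝ᵥ v)) (hτ : β / 2 ≤ τ) (d : ι → ℝ) :
    1 / 2 * (A *ᵥ d ⬝ᵥ d) - τ * (B *ᵥ d ⬝ᵥ d) ≤ (1 / 2 - τ / β) * lam * (d ⬝ᵥ d) := by
  have hτB : τ / β * (A *ᵥ d ⬝ᵥ d) ≤ τ * (B *ᵥ d ⬝ᵥ d) := by
    rw [div_mul_eq_mul_div, div_le_iff₀ hβ, mul_assoc, mul_comm (B *ᵥ d ⬝ᵥ d)]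
    exact mul_le_mul_of_nonneg_left (hAB d) (by linarith)
  have hlamA : (1 / 2 - τ / β) * (A *ᵥ d ⬝ᵥ d) ≤ (1 / 2 - τ / β) * (lam * (d ⬝ᵥ d)) := by
    have : 1 / 2 ≤ τ / β := by rw [le_div_iff₀ hβ]; linarith
    exact mul_le_mul_of_nonpos_left (hA.mul_dotProduct_self_le hlam d) (by linarith)
  linarith

theorem allenCahnEnergy_le_of_step {f F : ℝ → ℝ} {L κ s : ℝ}
    (hA : A.IsHermitian) (hlam : lam ∈ lowerBounds {r : ℝ | ∃ v : ι → ℝ, v ≠ 0 ∧ A *ᵥ v = r • v})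
    (hβ : 0 < β) (hAB : ∀ v, A *ᵥ v ⬝ᵥ v ≤ β * (B *ᵥ v ⬝ᵥ v)) (hτ : β / 2 ≤ τ)
    (hF : ∀ x, HasDerivAt F (f x) x) (hf : ∀ a b, |f b - f a| ≤ L * |b - a|) (hκ : 0 ≤ κ)
    (hs : κ * L / 2 + (1 / 2 - τ / β) * lam ≤ s) {x y : ι → ℝ}
    (hstep : s • (y - x) + τ • (B *ᵥ (y - x)) + A *ᵥ x + κ • (fun i => f (x i)) = 0) :
    allenCahnEnergy A F κ y ≤ allenCahnEnergy A F κ x := by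
  obtain ⟨d, rfl⟩ : ∃ d, y = x + d := ⟨y - x, (add_sub_cancel x y).symm⟩
  have hsum := mul_le_mul_of_nonneg_left (sum_le_sum_add_dotProduct_add hF hf x (x + d)) hκ
  rw [add_sub_cancel_left] at hstep hsum
  have htest := congrArg (· ⬝ᵥ d) hstep
  simp only [add_dotProduct, smul_dotProduct, zero_dotProduct, smul_eq_mul] at htest
  have hquad := (isHermitian_iff_isSymm.mp hA).mulVec_add_dotProduct_add_s10 x d
  have hdiss := half_mulVec_dotProduct_sub_le hA hlam hβ hAB hτ d
  have hcoef := mul_le_mul_of_nonneg_right hs (dotProduct_self_star_nonneg d)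
  rw [star_trivial] at hcoef
  unfold allenCahnEnergy
  linarith

end AllenCahn

theorem stmt_10_general {n : ℕ} (A B : Matrix (Fin n) (Fin n) ℝ)
    (hA : A.PosSemidef)
    (α β : ℝ) (hβ : 0 < β)
    (hspec : ∀ v : Fin n → ℝ,
      α * (B.mulVec v ⬝ᵥ v) ≤ A.mulVec v ⬝ᵥ v ∧ A.mulVec v ⬝ᵥ v ≤ β * (B.mulVec v ⬝ᵥ v))
    (f F : ℝ → ℝ) (L : ℝ)
    (hF : ∀ x, HasDerivAt F (f x) x)
    (hf : Differentiable ℝ f) (hL : ∀ x, |deriv f x| ≤ L)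
    (ε τ Δt : ℝ)
    (lamMin : ℝ) (hlam : IsLeast {r : ℝ | ∃ v : Fin n → ℝ, v ≠ 0 ∧ A.mulVec v = r • v} lamMin)
    (hτ : β / 2 ≤ τ)
    (hΔt : 0 < Δt)
    (hΔt' : Δt < 1 / (L / (2 * ε ^ 2) - (τ / β - 1 / 2) * lamMin))
    (u : ℕ → Fin n → ℝ)
    (hscheme : ∀ k, Δt⁻¹ • (u (k + 1) - u k)
      + τ • B.mulVec (u (k + 1) - u k) + A.mulVec (u k)
      + (1 / ε ^ 2) • (fun i => f (u k i)) = 0)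
    (E : (Fin n → ℝ) → ℝ)
    (hE : ∀ v, E v = (1 / 2) * (A.mulVec v ⬝ᵥ v) + (1 / ε ^ 2) * ∑ i, F (v i)) :
    ∀ k : ℕ, E (u (k + 1)) ≤ E (u k) := by
  have hlip : ∀ a b, |f b - f a| ≤ L * |b - a| := fun a b =>
    convex_univ.norm_image_sub_le_of_norm_deriv_le (fun x _ => hf x) (fun x _ => hL x)
      (Set.mem_univ a) (Set.mem_univ b)
  have hΔt_inv : 1 / ε ^ 2 * L / 2 + (1 / 2 - τ / β) * lamMin ≤ Δt⁻¹ := by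
    have hc := one_div_pos.mp (hΔt.trans hΔt')
    have := (lt_one_div hΔt hc).mp hΔt'
    rw [one_div Δt] at this
    linarith [show L / (2 * ε ^ 2) = 1 / ε ^ 2 * L / 2 by ring]
  intro k
  rw [hE, hE]
  exact allenCahnEnergy_le_of_step hA.isHermitian hlam.2 hβ (fun v => (hspec v).2) hτ hF hlip
    (by positivity) hΔt_inv (hscheme k)

theorem stmt_10 {n : ℕ} (A B : Matrix (Fin n) (Fin n) ℝ)
    (hA : A.PosSemidef) (hB : B.PosSemidef)
    (hkerA : ∀ v : Fin n → ℝ, A.mulVec v = 0 → v = 0)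
    (hkerB : ∀ v : Fin n → ℝ, B.mulVec v = 0 → v = 0)
    (α β : ℝ) (hα : 0 < α) (hβ : 0 < β)
    (hspec : ∀ v : Fin n → ℝ,
      α * (B.mulVec v ⬝ᵥ v) ≤ A.mulVec v ⬝ᵥ v ∧ A.mulVec v ⬝ᵥ v ≤ β * (B.mulVec v ⬝ᵥ v))
    (f F : ℝ → ℝ) (L : ℝ)
    (hF : ∀ x, HasDerivAt F (f x) x)
    (hf : Differentiable ℝ f) (hL : ∀ x, |deriv f x| ≤ L)
    (ε τ Δt : ℝ) (hε : 0 < ε)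
    (lamMin : ℝ) (hlam : IsLeast {r : ℝ | ∃ v : Fin n → ℝ, v ≠ 0 ∧ A.mulVec v = r • v} lamMin)
    (hτ : β / 2 ≤ τ)
    (hcond : (τ / β - 1 / 2) * lamMin - L / (2 * ε ^ 2) < 0)
    (hΔt : 0 < Δt)
    (hΔt' : Δt < 1 / (L / (2 * ε ^ 2) - (τ / β - 1 / 2) * lamMin))
    (u : ℕ → Fin n → ℝ)
    (hscheme : ∀ k, Δt⁻¹ • (u (k + 1) - u k)
      + τ • B.mulVec (u (k + 1) - u k) + A.mulVec (u k)
      + (1 / ε ^ 2) • (fun i => f (u k i)) = 0)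
    (E : (Fin n → ℝ) → ℝ)
    (hE : ∀ v, E v = (1 / 2) * (A.mulVec v ⬝ᵥ v) + (1 / ε ^ 2) * ∑ i, F (v i)) :
    ∀ k : ℕ, E (u (k + 1)) ≤ E (u k) :=
  stmt_10_general A B hA α β hβ hspec f F L hF hf hL ε τ Δt lamMin hlam hτ hΔt hΔt' u hscheme E hE
end

section
/- Let A₁,...,A_m and B₁,...,B_m be symmetric positive semidefinite n×n matrices with Ker(A_i) = Ker(B_i) = W for all i, and with α_i⟨B_iu,u⟩ ≤ ⟨A_iu,u⟩ ≤ β_i⟨B_iu,u⟩ for all u (α_i, β_i > 0). Consider the m-stage RSS splitting scheme where each substep is u^{new} = u^{old} - Δt(I + τ_iΔt B_i)^{-1} A_i u^{old}. If τ_i ≥ β_i/2 for all i, then each substep is unconditionally stable in the energy ⟨A_i u, u⟩; if some τ_i < β_i/2, stability holds provided 0 < Δt < min_i 2/((1 - 2τ_i/β_i)ρ(A_i)). Moreover u^{k+1} - u^k ∈ W^⊥ for all k. -/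
/-!
For one substep write `d = x' - x`, so that `(1 + τΔt B) d = -Δt A x`. Pairing this with `d` and
expanding the energy gives `Δt (⟨A x', x'⟩ - ⟨A x, x⟩) = Δt ⟨A d, d⟩ - 2 |d|² - 2τΔt ⟨B d, d⟩`.
If `2τ ≥ β`, the bound `⟨A d, d⟩ ≤ β ⟨B d, d⟩` makes this nonpositive. Otherwise split `⟨A d, d⟩`
with weights `1 - 2τ/β` and `2τ/β`: the first part is at most `(1 - 2τ/β) ρ |d|²`, which the
step-size restriction `Δt (1 - 2τ/β) ρ < 2` absorbs into `2 |d|²`.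

All matrices are symmetric and `A`, `B` vanish on `W`, so `(1 + τΔt B)⁻¹ A` has range orthogonal
to `W`; hence every increment, and their telescoping sum `u^{k+1} - u^k`, is orthogonal to `W`.
-/

open Matrix

namespace Matrix

variable {ι : Type*} [Fintype ι]

theorem IsHermitian.mulVec_dotProduct_comm {A : Matrix ι ι ℝ} (hA : A.IsHermitian)
    (x y : ι → ℝ) : A *ᵥ x ⬝ᵥ y = x ⬝ᵥ A *ᵥ y := by
  rw [dotProduct_mulVec, ← mulVec_transpose, (isHermitian_iff_isSymm.mp hA).eq]

variable [DecidableEq ι]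

theorem IsHermitian.dotProduct_mulVec_le {A : Matrix ι ι ℝ} (hA : A.IsHermitian) {ρ : ℝ}
    (hρ : ρ ∈ upperBounds {r | ∃ v, v ≠ 0 ∧ A *ᵥ v = r • v}) (x : ι → ℝ) :
    A *ᵥ x ⬝ᵥ x ≤ ρ * (x ⬝ᵥ x) := by
  have hM : (ρ • 1 - A).IsHermitian := (isHermitian_one.smul (.all ρ)).sub hA
  have hpsd : (ρ • 1 - A).PosSemidef := by
    refine hM.posSemidef_iff_eigenvalues_nonneg.mpr fun j => ?_
    set w : ι → ℝ := ⇑(hM.eigenvectorBasis j)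
    have hw : w ≠ 0 := fun h =>
      hM.eigenvectorBasis.orthonormal.ne_zero j (by ext t; exact congrFun h t)
    have hAw : A *ᵥ w = (ρ - hM.eigenvalues j) • w := by
      rw [sub_smul, ← hM.mulVec_eigenvectorBasis j, sub_mulVec, smul_mulVec, one_mulVec,
        sub_sub_cancel]
    simpa using hρ ⟨w, hw, hAw⟩
  have := hpsd.dotProduct_mulVec_nonneg x
  simp only [star_trivial, sub_mulVec, smul_mulVec, one_mulVec, dotProduct_sub,
    dotProduct_smul, smul_eq_mul, dotProduct_comm x (A *ᵥ x)] at this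
  linarith

theorem PosSemidef.isUnit_det_one_add_smul {B : Matrix ι ι ℝ} (hB : B.PosSemidef) {c : ℝ}
    (hc : 0 ≤ c) : IsUnit (1 + c • B).det :=
  (isUnit_iff_isUnit_det _).mp (PosDef.one.add_posSemidef (hB.smul hc)).isUnit

end Matrix

section RSS

variable {ι : Type*} [Fintype ι] [DecidableEq ι]

noncomputable def rssStep (A B : Matrix ι ι ℝ) (τ Δt : ℝ) (x : ι → ℝ) : ι → ℝ :=
  x - Δt • (1 + (τ * Δt) • B)⁻¹ *ᵥ A *ᵥ x

theorem one_add_smul_mulVec_rssStep_sub {A B : Matrix ι ι ℝ} {τ Δt : ℝ}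
    (hC : IsUnit (1 + (τ * Δt) • B).det) (x : ι → ℝ) :
    (1 + (τ * Δt) • B) *ᵥ (rssStep A B τ Δt x - x) = -(Δt • A *ᵥ x) := by
  rw [rssStep, sub_sub_cancel_left, mulVec_neg, mulVec_smul, mulVec_mulVec,
    mul_nonsing_inv _ hC, one_mulVec]

theorem rss_quadratic_le {Δt τ β ρ q b s : ℝ} (hΔt : 0 < Δt) (hτ : 0 ≤ τ) (hβ : 0 < β)
    (hs : 0 ≤ s) (hb : 0 ≤ b) (hqb : q ≤ β * b) (hqs : q ≤ ρ * s)
    (hcond : τ < β / 2 → Δt < 2 / ((1 - 2 * τ / β) * ρ)) :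
    Δt * q ≤ 2 * s + 2 * τ * Δt * b := by
  by_cases hτβ : τ < β / 2
  · have hθ : 0 < 1 - 2 * τ / β := by
      rw [sub_pos, div_lt_one hβ]; linarith
    have hΔt' := hcond hτβ
    -- `2 / 0 = 0` in Lean, so the step-size condition itself forces `ρ > 0`
    have hθρ : 0 < (1 - 2 * τ / β) * ρ := by
      by_contra! h
      exact absurd (hΔt.trans hΔt') (not_lt.mpr (div_nonpos_of_nonneg_of_nonpos two_pos.le h))
    have hstab : Δt * ((1 - 2 * τ / β) * ρ) < 2 := (lt_div_iff₀ hθρ).mp hΔt'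
    have hqb' : 2 * τ / β * q ≤ 2 * τ * b := by
      calc 2 * τ / β * q ≤ 2 * τ / β * (β * b) := by gcongr
        _ = 2 * τ * b := by field_simp
    calc Δt * q = Δt * (1 - 2 * τ / β) * q + Δt * (2 * τ / β * q) := by ring
      _ ≤ Δt * (1 - 2 * τ / β) * (ρ * s) + Δt * (2 * τ * b) := by gcongr
      _ = Δt * ((1 - 2 * τ / β) * ρ) * s + 2 * τ * Δt * b := by ring
      _ ≤ 2 * s + 2 * τ * Δt * b := by gcongr
  · calc Δt * q ≤ Δt * (β * b) := by gcongr
      _ ≤ Δt * (2 * τ * b) := by gcongr; linarith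
      _ ≤ 2 * s + 2 * τ * Δt * b := by nlinarith

theorem rssStep_energy_le {A B : Matrix ι ι ℝ} (hA : A.IsHermitian) (hB : B.PosSemidef)
    {β ρ τ Δt : ℝ} (hβ : 0 < β) (hAB : ∀ v, A *ᵥ v ⬝ᵥ v ≤ β * (B *ᵥ v ⬝ᵥ v))
    (hρ : ρ ∈ upperBounds {r | ∃ v, v ≠ 0 ∧ A *ᵥ v = r • v}) (hτ : 0 ≤ τ) (hΔt : 0 < Δt)
    (hcond : τ < β / 2 → Δt < 2 / ((1 - 2 * τ / β) * ρ)) (x : ι → ℝ) :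
    A *ᵥ rssStep A B τ Δt x ⬝ᵥ rssStep A B τ Δt x ≤ A *ᵥ x ⬝ᵥ x := by
  set d := rssStep A B τ Δt x - x
  have hstep : rssStep A B τ Δt x = x + d := (add_sub_cancel x _).symm
  have hexpand : A *ᵥ (x + d) ⬝ᵥ (x + d)
      = A *ᵥ x ⬝ᵥ x + 2 * (A *ᵥ x ⬝ᵥ d) + A *ᵥ d ⬝ᵥ d := by
    rw [mulVec_add, add_dotProduct, dotProduct_add, dotProduct_add,
      hA.mulVec_dotProduct_comm d x, dotProduct_comm d (A *ᵥ x)]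
    ring
  have hincrement : Δt * (A *ᵥ x ⬝ᵥ d) = -(d ⬝ᵥ d + τ * Δt * (B *ᵥ d ⬝ᵥ d)) := by
    have h := congrArg (· ⬝ᵥ d) (one_add_smul_mulVec_rssStep_sub (A := A)
      (hB.isUnit_det_one_add_smul (mul_nonneg hτ hΔt.le)) x)
    simp only [add_mulVec, one_mulVec, smul_mulVec, add_dotProduct, smul_dotProduct,
      neg_dotProduct, smul_eq_mul] at h
    linarith
  have hdd : 0 ≤ d ⬝ᵥ d := Fintype.sum_nonneg fun i => mul_self_nonneg (d i)
  have hbound := rss_quadratic_le hΔt hτ hβ hdd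
    (by simpa [dotProduct_comm] using hB.dotProduct_mulVec_nonneg d) (hAB d)
    (hA.dotProduct_mulVec_le hρ d) hcond
  have hdecay : Δt * (2 * (A *ᵥ x ⬝ᵥ d) + A *ᵥ d ⬝ᵥ d) ≤ 0 := by linarith
  rw [hstep, hexpand]
  linarith [nonpos_of_mul_nonpos_right hdecay hΔt]

theorem rssStep_sub_dotProduct_eq_zero {A B : Matrix ι ι ℝ} (hA : A.IsHermitian)
    (hB : B.IsHermitian) {τ Δt : ℝ} (hC : IsUnit (1 + (τ * Δt) • B).det) {w : ι → ℝ}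
    (hAw : A *ᵥ w = 0) (hBw : B *ᵥ w = 0) (x : ι → ℝ) :
    (rssStep A B τ Δt x - x) ⬝ᵥ w = 0 := by
  have hCw : (1 + (τ * Δt) • B) *ᵥ w = w := by
    rw [add_mulVec, one_mulVec, smul_mulVec, hBw, smul_zero, add_zero]
  have hCinvw : (1 + (τ * Δt) • B)⁻¹ *ᵥ w = w := by
    conv_lhs => rw [← hCw, mulVec_mulVec, nonsing_inv_mul _ hC, one_mulVec]
  have hCinv : (1 + (τ * Δt) • B)⁻¹.IsHermitian := (isHermitian_one.add (hB.smul (.all _))).inv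
  rw [rssStep, sub_sub_cancel_left, neg_dotProduct, smul_dotProduct, hCinv.mulVec_dotProduct_comm,
    hCinvw, hA.mulVec_dotProduct_comm, hAw, dotProduct_zero, smul_zero, neg_zero]

end RSS

theorem stmt_17_general {n m : ℕ} (A B : Fin m → Matrix (Fin n) (Fin n) ℝ)
    (hA : ∀ i, (A i).PosSemidef) (hB : ∀ i, (B i).PosSemidef)
    (W : Submodule ℝ (Fin n → ℝ))
    (hkerA : ∀ i, ∀ v, (A i).mulVec v = 0 ↔ v ∈ W)
    (hkerB : ∀ i, ∀ v, (B i).mulVec v = 0 ↔ v ∈ W)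
    (α β : Fin m → ℝ) (hβ : ∀ i, 0 < β i)
    (hspec : ∀ i, ∀ v : Fin n → ℝ,
      α i * ((B i).mulVec v ⬝ᵥ v) ≤ (A i).mulVec v ⬝ᵥ v ∧
        (A i).mulVec v ⬝ᵥ v ≤ β i * ((B i).mulVec v ⬝ᵥ v))
    (ρA : Fin m → ℝ)
    (hρ : ∀ i, IsGreatest {r : ℝ | ∃ v : Fin n → ℝ, v ≠ 0 ∧ (A i).mulVec v = r • v} (ρA i))
    (τ : Fin m → ℝ) (hτ0 : ∀ i, 0 ≤ τ i) (Δt : ℝ) (hΔt : 0 < Δt)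
    (hcond : ∀ i, τ i < β i / 2 → Δt < 2 / ((1 - 2 * τ i / β i) * ρA i))
    (u : ℕ → Fin n → ℝ) (v : ℕ → ℕ → Fin n → ℝ)
    (hv0 : ∀ k, v k 0 = u k) (hvm : ∀ k, v k m = u (k + 1))
    (hsub : ∀ k, ∀ i : Fin m,
      v k (i + 1) = v k i
        - Δt • ((1 + (τ i * Δt) • B i)⁻¹).mulVec ((A i).mulVec (v k i))) :
    (∀ k, ∀ i : Fin m,
        (A i).mulVec (v k (i + 1)) ⬝ᵥ v k (i + 1) ≤ (A i).mulVec (v k i) ⬝ᵥ v k i) ∧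
      (∀ k : ℕ, ∀ w ∈ W, (u (k + 1) - u k) ⬝ᵥ w = 0) := by
  refine ⟨fun k i => ?_, fun k w hw => ?_⟩
  · rw [hsub k i]
    exact rssStep_energy_le (hA i).1 (hB i) (hβ i) (fun v => (hspec i v).2) (hρ i).2 (hτ0 i) hΔt
      (hcond i) _
  · rw [← hvm k, ← hv0 k, ← Finset.sum_range_sub, ← Fin.sum_univ_eq_sum_range, sum_dotProduct]
    refine Finset.sum_eq_zero fun i _ => ?_
    rw [hsub k i]
    exact rssStep_sub_dotProduct_eq_zero (hA i).1 (hB i).1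
      ((hB i).isUnit_det_one_add_smul (mul_nonneg (hτ0 i) hΔt.le)) ((hkerA i w).mpr hw)
      ((hkerB i w).mpr hw) _

theorem stmt_17 {n m : ℕ} (A B : Fin m → Matrix (Fin n) (Fin n) ℝ)
    (hA : ∀ i, (A i).PosSemidef) (hB : ∀ i, (B i).PosSemidef)
    (W : Submodule ℝ (Fin n → ℝ))
    (hkerA : ∀ i, ∀ v, (A i).mulVec v = 0 ↔ v ∈ W)
    (hkerB : ∀ i, ∀ v, (B i).mulVec v = 0 ↔ v ∈ W)
    (α β : Fin m → ℝ) (hα : ∀ i, 0 < α i) (hβ : ∀ i, 0 < β i)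
    (hspec : ∀ i, ∀ v : Fin n → ℝ,
      α i * ((B i).mulVec v ⬝ᵥ v) ≤ (A i).mulVec v ⬝ᵥ v ∧
        (A i).mulVec v ⬝ᵥ v ≤ β i * ((B i).mulVec v ⬝ᵥ v))
    (ρA : Fin m → ℝ)
    (hρ : ∀ i, IsGreatest {r : ℝ | ∃ v : Fin n → ℝ, v ≠ 0 ∧ (A i).mulVec v = r • v} (ρA i))
    (τ : Fin m → ℝ) (hτ0 : ∀ i, 0 ≤ τ i) (Δt : ℝ) (hΔt : 0 < Δt)
    (hcond : ∀ i, τ i < β i / 2 → Δt < 2 / ((1 - 2 * τ i / β i) * ρA i))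
    (u : ℕ → Fin n → ℝ) (v : ℕ → ℕ → Fin n → ℝ)
    (hv0 : ∀ k, v k 0 = u k) (hvm : ∀ k, v k m = u (k + 1))
    (hsub : ∀ k, ∀ i : Fin m,
      v k (i + 1) = v k i
        - Δt • ((1 + (τ i * Δt) • B i)⁻¹).mulVec ((A i).mulVec (v k i))) :
    (∀ k, ∀ i : Fin m,
        (A i).mulVec (v k (i + 1)) ⬝ᵥ v k (i + 1) ≤ (A i).mulVec (v k i) ⬝ᵥ v k i) ∧
      (∀ k : ℕ, ∀ w ∈ W, (u (k + 1) - u k) ⬝ᵥ w = 0) :=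
  stmt_17_general A B hA hB W hkerA hkerB α β hβ hspec ρA hρ τ hτ0 Δt hΔt hcond u v hv0 hvm hsub
end
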